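/- Let n ≥ 2 and let V be an admissible configuration of size n. Then there exist exactly two admissible configurations U of size n+1 whose reduction R(U) equals V. (Equivalently: the reduction map from admissible configurations of size n+1 to admissible configurations of size n is surjective and exactly two-to-one, so every admissible configuration is obtained uniquely from the single chain {3,1} by repeatedly applying one of the two extension moves.) -/

import Mathlib

/-- The maximum entry of a finite set of integers (`0` for the empty set). -/
def fmax (C : Finset ℤ) : ℤ := WithBot.unbotD 0 C.max

/-- The minimum entry of a finite set of integers (`0` for the empty set). -/
def fmin (C : Finset ℤ) : ℤ := WithTop.untopD 0 C.min

/-- A *chain* is a nonempty set of integers of the form `{c, c-2, …, c-2k}`. -/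
def IsChainSet (C : Finset ℤ) : Prop :=
  ∃ (c : ℤ) (k : ℕ), C = (Finset.range (k + 1)).image (fun i : ℕ => c - 2 * (i : ℤ))

/-- Two chains with disjoint entries, with maxima `A, B` and minima `a, b`, are *linked*
if `A > B > a` or `B > A > b`. -/
def LinkedChains (C D : Finset ℤ) : Prop :=
  Disjoint C D ∧
    ((fmax D < fmax C ∧ fmin C < fmax D) ∨ (fmax C < fmax D ∧ fmin D < fmax C))

/-- The set of all entries of a collection of chains. -/
def entriesOf (S : Finset (Finset ℤ)) : Finset ℤ := S.biUnion id

/-- A finite collection of pairwise disjoint chains. -/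
def IsChainCollection (S : Finset (Finset ℤ)) : Prop :=
  (∀ C ∈ S, IsChainSet C) ∧ ∀ C ∈ S, ∀ D ∈ S, C ≠ D → Disjoint C D

/-- A collection of pairwise disjoint chains is *interlaced* if any two of its chains are
joined by a finite sequence of chains of the collection in which consecutive chains are
linked. -/
def Interlaced (S : Finset (Finset ℤ)) : Prop :=
  ∀ C ∈ S, ∀ D ∈ S,
    Relation.ReflTransGen (fun X Y => X ∈ S ∧ Y ∈ S ∧ LinkedChains X Y) C D

/-- An *admissible configuration of size `n`*: an interlaced collection of pairwise disjoint
chains of positive integers with `n` entries in total and smallest entry equal to `1`. -/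
def AdmissibleConfig (n : ℕ) (S : Finset (Finset ℤ)) : Prop :=
  IsChainCollection S ∧ Interlaced S ∧ (entriesOf S).card = n ∧
    (∀ x ∈ entriesOf S, 0 < x) ∧ (1 : ℤ) ∈ entriesOf S

/-- The reduction of Proposition 3.9: `Reduces U V` says that `V` is obtained from `U` by
removing the chain `{M-1}` if it is present (where `M` is the largest entry of `U`), and
otherwise by removing the entry `M` from the chain of `U` containing it. -/
def Reduces (U V : Finset (Finset ℤ)) : Prop :=
  (({fmax (entriesOf U) - 1} : Finset ℤ) ∈ U ∧
      V = U.erase ({fmax (entriesOf U) - 1} : Finset ℤ)) ∨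
  (({fmax (entriesOf U) - 1} : Finset ℤ) ∉ U ∧
      ∃ C ∈ U, fmax (entriesOf U) ∈ C ∧
        V = insert (C.erase (fmax (entriesOf U))) (U.erase C))

/-!
Let `M` be the largest entry of `V`. A preimage of `V` undoes one of the two cases of the
reduction. Undoing the removal of a top entry means giving some chain `D` the new top entry
`fmax D + 2`; this must become the largest entry and `{fmax D + 1}` must not be a chain, which
leaves exactly the chain with maximum `M` and the chain containing `M - 1`, if there is one.
Undoing the removal of a singleton means adding `{M - 1}`, which is possible exactly when `M - 1`
is not an entry. So there are always exactly two preimages. Raising the top of a chain keeps all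
its links, and `{M - 1}` is linked with the chain of `M`: since `V` is interlaced and has a
second entry, that chain is not a singleton, hence contains `M - 2`.
-/

open Finset

section Extrema

variable {C : Finset ℤ} {a x : ℤ}

lemma fmax_eq_max' (h : C.Nonempty) : fmax C = C.max' h := by
  simp [fmax, ← Finset.coe_max' h]

lemma fmin_eq_min' (h : C.Nonempty) : fmin C = C.min' h := by
  simp [fmin, ← Finset.coe_min' h]

lemma fmax_mem (h : C.Nonempty) : fmax C ∈ C := fmax_eq_max' h ▸ C.max'_mem h

lemma fmin_mem (h : C.Nonempty) : fmin C ∈ C := fmin_eq_min' h ▸ C.min'_mem h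

lemma le_fmax (hx : x ∈ C) : x ≤ fmax C := fmax_eq_max' ⟨x, hx⟩ ▸ C.le_max' x hx

lemma fmin_le (hx : x ∈ C) : fmin C ≤ x := fmin_eq_min' ⟨x, hx⟩ ▸ C.min'_le x hx

lemma fmax_eq_of_mem (ha : a ∈ C) (h : ∀ x ∈ C, x ≤ a) : fmax C = a :=
  le_antisymm (h _ (fmax_mem ⟨a, ha⟩)) (le_fmax ha)

lemma fmin_eq_of_mem (ha : a ∈ C) (h : ∀ x ∈ C, a ≤ x) : fmin C = a :=
  le_antisymm (fmin_le ha) (h _ (fmin_mem ⟨a, ha⟩))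

lemma fmax_singleton (a : ℤ) : fmax {a} = a := fmax_eq_of_mem (mem_singleton_self a) (by simp)

lemma fmin_singleton (a : ℤ) : fmin {a} = a := fmin_eq_of_mem (mem_singleton_self a) (by simp)

lemma fmax_insert_of_le (h : ∀ x ∈ C, x ≤ a) : fmax (insert a C) = a :=
  fmax_eq_of_mem (mem_insert_self a C) (by simpa using h)

lemma fmin_insert_of_le (hC : C.Nonempty) (h : fmin C ≤ a) : fmin (insert a C) = fmin C :=
  fmin_eq_of_mem (mem_insert_of_mem (fmin_mem hC)) (by simpa [h] using fun x hx => fmin_le hx)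

end Extrema

section Chains

variable {C : Finset ℤ}

lemma IsChainSet.nonempty (h : IsChainSet C) : C.Nonempty := by
  obtain ⟨c, k, rfl⟩ := h
  exact ⟨c, mem_image.2 ⟨0, by simp, by ring⟩⟩

lemma isChainSet_iff :
    IsChainSet C ↔
      C.Nonempty ∧ ∀ x, x ∈ C ↔ fmin C ≤ x ∧ x ≤ fmax C ∧ (fmax C - x) % 2 = 0 := by
  constructor
  · intro h
    refine ⟨h.nonempty, ?_⟩
    obtain ⟨c, k, rfl⟩ := h
    have hmax : fmax ((range (k + 1)).image fun i : ℕ => c - 2 * (i : ℤ)) = c := by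
      refine fmax_eq_of_mem (mem_image.2 ⟨0, by simp, by ring⟩) fun y hy => ?_
      obtain ⟨i, -, rfl⟩ := mem_image.1 hy
      omega
    have hmin : fmin ((range (k + 1)).image fun i : ℕ => c - 2 * (i : ℤ)) = c - 2 * k := by
      refine fmin_eq_of_mem (mem_image.2 ⟨k, by simp, rfl⟩) fun y hy => ?_
      obtain ⟨i, hi, rfl⟩ := mem_image.1 hy
      rw [mem_range] at hi
      omega
    intro x
    rw [hmax, hmin, mem_image]
    simp only [mem_range]
    constructor
    · rintro ⟨i, hi, rfl⟩
      omega
    · rintro ⟨h₁, h₂, h₃⟩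
      exact ⟨(c - x).toNat / 2, by omega, by omega⟩
  · rintro ⟨hne, h⟩
    have hpar := ((h _).1 (fmin_mem hne)).2.2
    have hle := fmin_le (fmax_mem hne)
    refine ⟨fmax C, ((fmax C - fmin C) / 2).toNat, ?_⟩
    ext x
    rw [h x, mem_image]
    simp only [mem_range]
    constructor
    · rintro ⟨h₁, h₂, h₃⟩
      exact ⟨((fmax C - x) / 2).toNat, by omega, by omega⟩
    · rintro ⟨i, hi, rfl⟩
      omega

lemma IsChainSet.mem_iff (h : IsChainSet C) (x : ℤ) :
    x ∈ C ↔ fmin C ≤ x ∧ x ≤ fmax C ∧ (fmax C - x) % 2 = 0 :=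
  (isChainSet_iff.1 h).2 x

lemma isChainSet_singleton (a : ℤ) : IsChainSet {a} := ⟨a, 0, by simp⟩

lemma IsChainSet.fmax_sub_one_not_mem (h : IsChainSet C) : fmax C - 1 ∉ C := fun hx => by
  have := (h.mem_iff _).1 hx
  omega

lemma IsChainSet.fmax_sub_two_mem (h : IsChainSet C) (hC : C ≠ {fmax C}) : fmax C - 2 ∈ C := by
  have hne := h.nonempty
  have hpar := ((h.mem_iff _).1 (fmin_mem hne)).2.2
  have hlt : fmin C < fmax C := by
    refine lt_of_le_of_ne (fmin_le (fmax_mem hne)) fun heq => hC ?_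
    exact eq_singleton_iff_unique_mem.2
      ⟨fmax_mem hne, fun x hx => le_antisymm (le_fmax hx) (heq ▸ fmin_le hx)⟩
  exact (h.mem_iff _).2 ⟨by omega, by omega, by omega⟩

lemma IsChainSet.fmax_erase_fmax (h : IsChainSet C) (hC : C ≠ {fmax C}) :
    fmax (C.erase (fmax C)) = fmax C - 2 := by
  refine fmax_eq_of_mem (mem_erase.2 ⟨by omega, h.fmax_sub_two_mem hC⟩) fun x hx => ?_
  have := (h.mem_iff x).1 (mem_of_mem_erase hx)
  have := ne_of_mem_erase hx
  omega

lemma IsChainSet.insert_fmax_add_two (h : IsChainSet C) :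
    IsChainSet (insert (fmax C + 2) C) := by
  have hne := h.nonempty
  have hle := fmin_le (fmax_mem hne)
  have hmax : fmax (insert (fmax C + 2) C) = fmax C + 2 :=
    fmax_insert_of_le fun x hx => by have := le_fmax hx; omega
  have hmin : fmin (insert (fmax C + 2) C) = fmin C := fmin_insert_of_le hne (by omega)
  refine isChainSet_iff.2 ⟨insert_nonempty _ _, fun x => ?_⟩
  rw [hmax, hmin, mem_insert, h.mem_iff]
  omega

end Chains

section Collections

variable {S T : Finset (Finset ℤ)} {C D : Finset ℤ} {x : ℤ}

lemma mem_entriesOf : x ∈ entriesOf S ↔ ∃ C ∈ S, x ∈ C := by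
  simp [entriesOf]

lemma subset_entriesOf (hC : C ∈ S) : C ⊆ entriesOf S :=
  fun _ hx => mem_entriesOf.2 ⟨C, hC, hx⟩

lemma entriesOf_insert : entriesOf (insert C S) = C ∪ entriesOf S := by
  simp [entriesOf]

lemma IsChainCollection.eq_of_mem_of_mem (hS : IsChainCollection S) (hC : C ∈ S) (hD : D ∈ S)
    (hxC : x ∈ C) (hxD : x ∈ D) : C = D :=
  by_contra fun hne => disjoint_left.1 (hS.2 C hC D hD hne) hxC hxD

lemma IsChainCollection.exists_mem_and_iff {P : Finset ℤ → Prop} (hS : IsChainCollection S)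
    (hD : D ∈ S) (hx : x ∈ D) : (∃ C ∈ S, x ∈ C ∧ P C) ↔ P D :=
  ⟨fun ⟨_, hC, hxC, hP⟩ => hS.eq_of_mem_of_mem hC hD hxC hx ▸ hP,
    fun hP => ⟨D, hD, hx, hP⟩⟩

lemma IsChainCollection.fmax_le (hS : IsChainCollection S) (hC : C ∈ S) :
    fmax C ≤ fmax (entriesOf S) :=
  le_fmax (subset_entriesOf hC (fmax_mem (hS.1 C hC).nonempty))

lemma entriesOf_erase (hS : IsChainCollection S) (hC : C ∈ S) :
    entriesOf (S.erase C) = entriesOf S \ C := by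
  ext x
  simp only [mem_entriesOf, mem_erase, mem_sdiff]
  constructor
  · rintro ⟨D, ⟨hDC, hD⟩, hx⟩
    exact ⟨⟨D, hD, hx⟩, fun hxC => hDC (hS.eq_of_mem_of_mem hD hC hx hxC)⟩
  · rintro ⟨⟨D, hD, hx⟩, hxC⟩
    exact ⟨D, ⟨fun h => hxC (h ▸ hx), hD⟩, hx⟩

lemma IsChainCollection.subset (hS : IsChainCollection S) (hT : T ⊆ S) : IsChainCollection T :=
  ⟨fun C hC => hS.1 C (hT hC), fun C hC D hD => hS.2 C (hT hC) D (hT hD)⟩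

lemma IsChainCollection.insert_of_disjoint (hS : IsChainCollection S) (hC : IsChainSet C)
    (hdisj : ∀ D ∈ S, D ≠ C → Disjoint C D) : IsChainCollection (insert C S) := by
  refine ⟨by simpa [hC] using hS.1, fun X hX Y hY hXY => ?_⟩
  rcases mem_insert.1 hX with rfl | hXS <;> rcases mem_insert.1 hY with rfl | hYS
  · exact absurd rfl hXY
  · exact hdisj Y hYS (Ne.symm hXY)
  · exact (hdisj X hXS hXY).symm
  · exact hS.2 X hXS Y hYS hXY

lemma LinkedChains.symm (h : LinkedChains C D) : LinkedChains D C :=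
  ⟨h.1.symm, h.2.symm⟩

lemma LinkedChains.ne (h : LinkedChains C D) : C ≠ D := by
  rintro rfl
  have := h.2
  omega

lemma LinkedChains.insert_of_lt {a : ℤ} (h : LinkedChains C D) (hC : C.Nonempty) (haD : a ∉ D)
    (hCa : fmax C ≤ a) (hDa : fmax D < a) : LinkedChains (insert a C) D := by
  refine ⟨disjoint_insert_left.2 ⟨haD, h.1⟩, Or.inl ?_⟩
  rw [fmax_insert_of_le fun x hx => (le_fmax hx).trans hCa,
    fmin_insert_of_le hC ((fmin_le (fmax_mem hC)).trans hCa)]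
  have := fmin_le (fmax_mem hC)
  have := h.2
  omega

lemma Interlaced.exists_linked (hS : Interlaced S) (hC : C ∈ S) (hD : D ∈ S) (hCD : C ≠ D) :
    ∃ Y ∈ S, LinkedChains C Y := by
  rcases Relation.ReflTransGen.cases_head (hS C hC D hD) with rfl | ⟨Y, ⟨-, hY, hlink⟩, -⟩
  · exact absurd rfl hCD
  · exact ⟨Y, hY, hlink⟩

lemma Interlaced.insert_of_linked (hS : Interlaced S) (hD : D ∈ S) (hlink : LinkedChains C D) :
    Interlaced (insert C S) := by
  have hS' : ∀ X ∈ S, ∀ Y ∈ S, Relation.ReflTransGen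
      (fun X Y => X ∈ insert C S ∧ Y ∈ insert C S ∧ LinkedChains X Y) X Y :=
    fun X hX Y hY => Relation.ReflTransGen.mono (fun _ _ h =>
      ⟨mem_insert_of_mem h.1, mem_insert_of_mem h.2.1, h.2.2⟩) _ _ (hS X hX Y hY)
  have hC' : C ∈ insert C S := mem_insert_self C S
  have hD' : D ∈ insert C S := mem_insert_of_mem hD
  intro X hX Y hY
  refine Relation.ReflTransGen.trans (b := D) ?_ ?_
  · rcases mem_insert.1 hX with rfl | hX
    · exact .single ⟨hC', hD', hlink⟩
    · exact hS' X hX D hD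
  · rcases mem_insert.1 hY with rfl | hY
    · exact .single ⟨hD', hC', hlink.symm⟩
    · exact hS' D hD Y hY

lemma Interlaced.of_surjOn (f : Finset ℤ → Finset ℤ) (hS : Interlaced S)
    (hmaps : ∀ C ∈ S, f C ∈ T) (hsurj : ∀ D ∈ T, ∃ C ∈ S, f C = D)
    (hlink : ∀ C ∈ S, ∀ D ∈ S, LinkedChains C D → LinkedChains (f C) (f D)) :
    Interlaced T := by
  intro C' hC' D' hD'
  obtain ⟨C, hC, rfl⟩ := hsurj C' hC'
  obtain ⟨D, hD, rfl⟩ := hsurj D' hD'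
  exact Relation.ReflTransGen.lift f (fun X Y h => ⟨hmaps X h.1, hmaps Y h.2.1,
    hlink X h.1 Y h.2.1 h.2.2⟩) _ _ (hS C hC D hD)

lemma IsChainCollection.exists_fmax_entriesOf_sub_one_le_iff {D₀ : Finset ℤ}
    {P : Finset ℤ → Prop} (hS : IsChainCollection S) (hD₀ : D₀ ∈ S)
    (hM : fmax (entriesOf S) ∈ D₀) :
    (∃ D ∈ S, fmax (entriesOf S) - 1 ≤ fmax D ∧ P D) ↔
      P D₀ ∨ ∃ D ∈ S, fmax (entriesOf S) - 1 ∈ D ∧ P D := by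
  constructor
  · rintro ⟨D, hD, htop, hP⟩
    have := hS.fmax_le hD
    obtain h | h : fmax D = fmax (entriesOf S) ∨ fmax D = fmax (entriesOf S) - 1 := by omega
    · exact Or.inl ((hS.exists_mem_and_iff hD₀ hM).1
        ⟨D, hD, h ▸ fmax_mem (hS.1 D hD).nonempty, hP⟩)
    · exact Or.inr ⟨D, hD, h ▸ fmax_mem (hS.1 D hD).nonempty, hP⟩
  · rintro (hP | ⟨D, hD, hMD, hP⟩)
    · exact ⟨D₀, hD₀, by have := le_fmax hM; omega, hP⟩
    · exact ⟨D, hD, le_fmax hMD, hP⟩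

end Collections

def extendChain (V : Finset (Finset ℤ)) (D : Finset ℤ) : Finset (Finset ℤ) :=
  insert (insert (fmax D + 2) D) (V.erase D)

def addSingletonBelowMax (V : Finset (Finset ℤ)) : Finset (Finset ℤ) :=
  insert {fmax (entriesOf V) - 1} V

section Moves

variable {n : ℕ} {U V : Finset (Finset ℤ)} {D : Finset ℤ}

lemma AdmissibleConfig.of_entriesOf_eq_insert {a : ℤ} (hV : AdmissibleConfig n V)
    (hU : IsChainCollection U) (hUi : Interlaced U) (hE : entriesOf U = insert a (entriesOf V))
    (ha : a ∉ entriesOf V) (ha₀ : 0 < a) : AdmissibleConfig (n + 1) U := by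
  obtain ⟨-, -, hcard, hpos, h₁⟩ := hV
  refine ⟨hU, hUi, ?_, ?_, ?_⟩ <;> rw [hE]
  · rw [card_insert_of_notMem ha, hcard]
  · simpa [ha₀] using hpos
  · exact mem_insert_of_mem h₁

lemma AdmissibleConfig.singleton_fmax_not_mem (hV : AdmissibleConfig n V) (hn : 2 ≤ n) :
    ({fmax (entriesOf V)} : Finset ℤ) ∉ V := by
  obtain ⟨hVc, hVi, hcard, -, -⟩ := hV
  intro hM
  obtain ⟨z, hz, hzM⟩ := exists_mem_ne (by omega : 1 < (entriesOf V).card) (fmax (entriesOf V))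
  obtain ⟨X, hX, hzX⟩ := mem_entriesOf.1 hz
  obtain ⟨Y, hY, hlink⟩ := hVi.exists_linked hM hX fun h => hzM (mem_singleton.1 (h ▸ hzX))
  have := hVc.fmax_le hY
  have := hlink.2
  rw [fmax_singleton, fmin_singleton] at this
  omega

lemma entriesOf_extendChain (hD : D ∈ V) :
    entriesOf (extendChain V D) = insert (fmax D + 2) (entriesOf V) := by
  rw [extendChain, entriesOf_insert, insert_union, ← entriesOf_insert, insert_erase hD]

lemma fmax_add_two_not_mem_entriesOf (htop : fmax (entriesOf V) - 1 ≤ fmax D) :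
    fmax D + 2 ∉ entriesOf V := fun h => by
  have := le_fmax h
  omega

lemma fmax_entriesOf_extendChain (htop : fmax (entriesOf V) - 1 ≤ fmax D) (hD : D ∈ V) :
    fmax (entriesOf (extendChain V D)) = fmax D + 2 := by
  rw [entriesOf_extendChain hD]
  exact fmax_insert_of_le fun x hx => by have := le_fmax hx; omega

lemma isChainCollection_extendChain (htop : fmax (entriesOf V) - 1 ≤ fmax D)
    (hV : IsChainCollection V) (hD : D ∈ V) : IsChainCollection (extendChain V D) := by
  refine (hV.subset (erase_subset D V)).insert_of_disjoint (hV.1 D hD).insert_fmax_add_two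
    fun X hX _ => ?_
  obtain ⟨hXD, hXV⟩ := mem_erase.1 hX
  exact disjoint_insert_left.2
    ⟨fun h => fmax_add_two_not_mem_entriesOf htop (subset_entriesOf hXV h),
      hV.2 D hD X hXV (Ne.symm hXD)⟩

lemma interlaced_extendChain (htop : fmax (entriesOf V) - 1 ≤ fmax D)
    (hV : IsChainCollection V) (hVi : Interlaced V) (hD : D ∈ V) :
    Interlaced (extendChain V D) := by
  have hraise : ∀ X ∈ V, LinkedChains D X → LinkedChains (insert (fmax D + 2) D) X :=
    fun X hX h => h.insert_of_lt (hV.1 D hD).nonempty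
      (fun ha => fmax_add_two_not_mem_entriesOf htop (subset_entriesOf hX ha)) (by omega)
      (by have := hV.fmax_le hX; omega)
  refine hVi.of_surjOn (fun X => if X = D then insert (fmax D + 2) D else X) (fun X hX => ?_)
    (fun Y hY => ?_) (fun X hX Y hY hXY => ?_)
  · split_ifs with h
    · exact mem_insert_self _ _
    · exact mem_insert_of_mem (mem_erase.2 ⟨h, hX⟩)
  · rcases mem_insert.1 hY with rfl | hY
    · exact ⟨D, hD, if_pos rfl⟩
    · exact ⟨Y, mem_of_mem_erase hY, if_neg (ne_of_mem_erase hY)⟩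
  · by_cases hXD : X = D <;> by_cases hYD : Y = D
    · exact absurd (hXD.trans hYD.symm) hXY.ne
    · subst hXD
      simpa [hYD] using hraise Y hY hXY
    · subst hYD
      simpa [hXD] using (hraise X hX hXY.symm).symm
    · simpa [hXD, hYD] using hXY

lemma reduces_extendChain (htop : fmax (entriesOf V) - 1 ≤ fmax D) (hD : D ∈ V)
    (hsing : ({fmax D + 1} : Finset ℤ) ∉ V) : Reduces (extendChain V D) V := by
  have ha := fmax_add_two_not_mem_entriesOf htop
  have haD : fmax D + 2 ∉ D := fun h => ha (subset_entriesOf hD h)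
  refine Or.inr ?_
  rw [fmax_entriesOf_extendChain htop hD, show fmax D + 2 - 1 = fmax D + 1 by ring]
  refine ⟨?_, _, mem_insert_self _ _, mem_insert_self _ _, ?_⟩
  · rw [extendChain, mem_insert, not_or]
    refine ⟨fun h => ?_, fun h => hsing (mem_of_mem_erase h)⟩
    have := h ▸ mem_insert_self (fmax D + 2) D
    simp at this
  · rw [extendChain, erase_insert haD,
      erase_insert fun h => ha (subset_entriesOf (mem_of_mem_erase h) (mem_insert_self _ _)),
      insert_erase hD]

lemma admissibleConfig_extendChain (htop : fmax (entriesOf V) - 1 ≤ fmax D)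
    (hV : AdmissibleConfig n V) (hD : D ∈ V) : AdmissibleConfig (n + 1) (extendChain V D) :=
  hV.of_entriesOf_eq_insert (isChainCollection_extendChain htop hV.1 hD)
    (interlaced_extendChain htop hV.1 hV.2.1 hD) (entriesOf_extendChain hD)
    (fmax_add_two_not_mem_entriesOf htop)
    (by have := hV.2.2.2.1 _ (subset_entriesOf hD (fmax_mem (hV.1.1 D hD).nonempty)); omega)

lemma entriesOf_addSingletonBelowMax :
    entriesOf (addSingletonBelowMax V) = insert (fmax (entriesOf V) - 1) (entriesOf V) :=
  entriesOf_insert.trans (insert_eq _ _).symm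

lemma fmax_entriesOf_addSingletonBelowMax (hne : (entriesOf V).Nonempty) :
    fmax (entriesOf (addSingletonBelowMax V)) = fmax (entriesOf V) := by
  rw [entriesOf_addSingletonBelowMax]
  exact fmax_eq_of_mem (mem_insert_of_mem (fmax_mem hne)) (by simpa using fun x hx => le_fmax hx)

lemma reduces_addSingletonBelowMax (hne : (entriesOf V).Nonempty)
    (hM : fmax (entriesOf V) - 1 ∉ entriesOf V) : Reduces (addSingletonBelowMax V) V := by
  refine Or.inl ?_
  rw [fmax_entriesOf_addSingletonBelowMax hne]
  exact ⟨mem_insert_self _ _,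
    (erase_insert fun h => hM (subset_entriesOf h (mem_singleton_self _))).symm⟩

lemma admissibleConfig_addSingletonBelowMax (hV : AdmissibleConfig n V)
    (hsing : ({fmax (entriesOf V)} : Finset ℤ) ∉ V)
    (hM : fmax (entriesOf V) - 1 ∉ entriesOf V) :
    AdmissibleConfig (n + 1) (addSingletonBelowMax V) := by
  obtain ⟨hVc, hVi, -, hpos, h₁⟩ := id hV
  obtain ⟨D, hD, hMD⟩ := mem_entriesOf.1 (fmax_mem ⟨1, h₁⟩)
  have hDmax : fmax D = fmax (entriesOf V) :=
    fmax_eq_of_mem hMD fun x hx => le_fmax (subset_entriesOf hD hx)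
  have hM₂ : fmax (entriesOf V) - 2 ∈ D :=
    hDmax ▸ (hVc.1 D hD).fmax_sub_two_mem fun h => hsing (hDmax ▸ h ▸ hD)
  have hlink : LinkedChains {fmax (entriesOf V) - 1} D := by
    refine ⟨disjoint_singleton_left.2 fun h => hM (subset_entriesOf hD h), Or.inr ?_⟩
    rw [fmax_singleton, hDmax]
    have := fmin_le hM₂
    omega
  refine hV.of_entriesOf_eq_insert
    (hVc.insert_of_disjoint (isChainSet_singleton _) fun X hX _ =>
      disjoint_singleton_left.2 fun h => hM (subset_entriesOf hX h))
    (hVi.insert_of_linked hD hlink) entriesOf_addSingletonBelowMax hM ?_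
  have := hpos _ (subset_entriesOf hD hM₂)
  omega

lemma Reduces.exists_eq_extendChain_or_eq_addSingletonBelowMax
    (hU : IsChainCollection U) (hV : IsChainCollection V) (h : Reduces U V) :
    (∃ D ∈ V, fmax (entriesOf V) - 1 ≤ fmax D ∧ U = extendChain V D) ∨
      (fmax (entriesOf V) - 1 ∉ entriesOf V ∧ U = addSingletonBelowMax V) := by
  rcases h with ⟨hmem, rfl⟩ | ⟨-, C, hC, hmC, rfl⟩ <;> set m := fmax (entriesOf U)
  · have hE : entriesOf (U.erase {m - 1}) = entriesOf U \ {m - 1} := entriesOf_erase hU hmem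
    have hmU : m ∈ entriesOf U :=
      fmax_mem ⟨m - 1, subset_entriesOf hmem (mem_singleton_self _)⟩
    have hmax : fmax (entriesOf (U.erase {m - 1})) = m :=
      fmax_eq_of_mem (hE ▸ mem_sdiff.2 ⟨hmU, by rw [mem_singleton]; omega⟩)
        fun x hx => le_fmax (mem_sdiff.1 (hE ▸ hx)).1
    refine Or.inr ⟨by rw [hmax, hE]; simp, ?_⟩
    rw [addSingletonBelowMax, hmax, insert_erase hmem]
  · set C' := C.erase m
    have hC'V : C' ∈ insert C' (U.erase C) := mem_insert_self _ _
    have hC'ne := (hV.1 C' hC'V).nonempty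
    have hCmax : fmax C = m := fmax_eq_of_mem hmC fun x hx => le_fmax (subset_entriesOf hC hx)
    have hC'max : fmax C' = m - 2 := by
      have hsing : C ≠ {fmax C} := fun hsing => by
        rw [hCmax] at hsing
        simp [C', hsing] at hC'ne
      simpa [hCmax] using (hU.1 C hC).fmax_erase_fmax hsing
    have hm₂ : m - 2 ∈ C' := hC'max ▸ fmax_mem hC'ne
    have hlt : ∀ x ∈ entriesOf (insert C' (U.erase C)), x ≤ m ∧ x ≠ m := by
      intro x hx
      rw [entriesOf_insert, entriesOf_erase hU hC, mem_union, mem_sdiff] at hx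
      rcases hx with hx | ⟨hx, hxC⟩
      · exact ⟨le_fmax (subset_entriesOf hC (mem_of_mem_erase hx)), ne_of_mem_erase hx⟩
      · exact ⟨le_fmax hx, fun h => hxC (h ▸ hmC)⟩
    have hM := hlt _ (fmax_mem ⟨m - 2, subset_entriesOf hC'V hm₂⟩)
    refine Or.inl ⟨C', hC'V, by omega, ?_⟩
    have hC'U : C' ∉ U.erase C := fun h =>
      ne_of_mem_erase h (hU.eq_of_mem_of_mem (mem_of_mem_erase h) hC hm₂ (mem_of_mem_erase hm₂))
    rw [extendChain, hC'max, sub_add_cancel, erase_insert hC'U, insert_erase hmC, insert_erase hC]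

lemma admissibleConfig_succ_and_reduces_iff (hV : AdmissibleConfig n V) (hn : 2 ≤ n) :
    AdmissibleConfig (n + 1) U ∧ Reduces U V ↔
      (∃ D ∈ V, fmax (entriesOf V) - 1 ≤ fmax D ∧ U = extendChain V D) ∨
        (fmax (entriesOf V) - 1 ∉ entriesOf V ∧ U = addSingletonBelowMax V) := by
  have hsing := hV.singleton_fmax_not_mem hn
  constructor
  · rintro ⟨hU, hR⟩
    exact hR.exists_eq_extendChain_or_eq_addSingletonBelowMax hU.1 hV.1
  · rintro (⟨D, hD, htop, rfl⟩ | ⟨hM, rfl⟩)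
    · refine ⟨admissibleConfig_extendChain htop hV hD, reduces_extendChain htop hD ?_⟩
      have := hV.1.fmax_le hD
      obtain h | h : fmax D = fmax (entriesOf V) ∨ fmax D + 1 = fmax (entriesOf V) := by omega
      · intro hmem
        have := le_fmax (subset_entriesOf hmem (mem_singleton_self _))
        omega
      · rwa [h]
    · exact ⟨admissibleConfig_addSingletonBelowMax hV hsing hM,
        reduces_addSingletonBelowMax ⟨1, hV.2.2.2.2⟩ hM⟩

end Moves

/-- **Algorithm 3.8 / Proposition 3.9.** For every admissible configuration `V` of size
`n ≥ 2` there exist exactly two admissible configurations `U` of size `n + 1` whose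
reduction is `V`. -/
theorem reduction_two_to_one (n : ℕ) (hn : 2 ≤ n) (V : Finset (Finset ℤ))
    (hV : AdmissibleConfig n V) :
    ∃ U₁ U₂ : Finset (Finset ℤ), U₁ ≠ U₂ ∧
      ∀ U : Finset (Finset ℤ),
        (AdmissibleConfig (n + 1) U ∧ Reduces U V) ↔ (U = U₁ ∨ U = U₂) := by
  have hne : (entriesOf V).Nonempty := ⟨1, hV.2.2.2.2⟩
  obtain ⟨D₀, hD₀, hMD₀⟩ := mem_entriesOf.1 (fmax_mem hne)
  have hD₀max : fmax D₀ = fmax (entriesOf V) :=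
    le_antisymm (hV.1.fmax_le hD₀) (le_fmax hMD₀)
  have hmax₀ := fmax_entriesOf_extendChain (by omega) hD₀
  simp_rw [admissibleConfig_succ_and_reduces_iff hV hn,
    hV.1.exists_fmax_entriesOf_sub_one_le_iff hD₀ hMD₀]
  by_cases hM : fmax (entriesOf V) - 1 ∈ entriesOf V
  · obtain ⟨D₁, hD₁, hMD₁⟩ := mem_entriesOf.1 hM
    have hD₁max : fmax D₁ ≠ fmax (entriesOf V) :=
      fun h => (hV.1.1 D₁ hD₁).fmax_sub_one_not_mem (h ▸ hMD₁)
    refine ⟨extendChain V D₀, extendChain V D₁, fun h => ?_, fun U => ?_⟩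
    · rw [h, fmax_entriesOf_extendChain (le_fmax hMD₁) hD₁] at hmax₀
      omega
    · simp only [hV.1.exists_mem_and_iff hD₁ hMD₁, hM, not_true_eq_false, false_and, or_false]
  · refine ⟨extendChain V D₀, addSingletonBelowMax V, fun h => ?_, fun U => ?_⟩
    · rw [h, fmax_entriesOf_addSingletonBelowMax hne] at hmax₀
      omega
    · have : ¬∃ D ∈ V, fmax (entriesOf V) - 1 ∈ D ∧ U = extendChain V D :=
        fun ⟨D, hD, hMD, _⟩ => hM (subset_entriesOf hD hMD)
      simp only [this, hM, not_false_eq_true, true_and, or_false]
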